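/- Let χ(π) := π(5−3π)/(3(1+π)) be the Taub–Mathews indicatrix function. Then for every π ∈ (0, 1/3): 0 < χ(π) < 1; ζ(π) := (π+1)(χ(π)−π)χ'(π) + 2χ(π)(1−χ(π)) = 8π(5−10π+9π²)/(9(1+π)²) > 0; and η(π) := (2π+1)χ(π) − π = 2π(1+2π−3π²)/(3(1+π)) > 0. Hence the Taub–Mathews equation of state fulfils both compressibility conditions H1^G and H2^G on (0, 1/3). -/

import Mathlib

noncomputable def taubMathews (x : ℝ) : ℝ := x * (5 - 3 * x) / (3 * (1 + x))

section

variable {x : ℝ}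

theorem taubMathews_pos (h0 : 0 < x) (h1 : x < 5 / 3) : 0 < taubMathews x :=
  div_pos (mul_pos h0 (by linarith)) (by linarith)

-- `χ < 1` reduces to `3x² - 2x + 3 > 0`, which has negative discriminant.
theorem taubMathews_lt_one (hx : -1 < x) : taubMathews x < 1 := by
  rw [taubMathews, div_lt_one (by linarith)]
  nlinarith [sq_nonneg (3 * x - 1)]

theorem hasDerivAt_taubMathews (hx : 1 + x ≠ 0) :
    HasDerivAt taubMathews ((5 - 6 * x - 3 * x ^ 2) / (3 * (1 + x) ^ 2)) x := by
  have hnum : HasDerivAt (fun t : ℝ => t * (5 - 3 * t)) (1 * (5 - 3 * x) + x * -(3 * 1)) x :=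
    (hasDerivAt_id x).mul (((hasDerivAt_id x).const_mul 3).const_sub 5)
  have hdenom : HasDerivAt (fun t : ℝ => 3 * (1 + t)) (3 * (0 + 1)) x :=
    ((hasDerivAt_const x 1).add (hasDerivAt_id x)).const_mul 3
  refine (hnum.div hdenom (mul_ne_zero three_ne_zero hx)).congr_deriv ?_
  field_simp
  ring

theorem taubMathews_zeta_eq (hx : 1 + x ≠ 0) :
    (x + 1) * (taubMathews x - x) * deriv taubMathews x
        + 2 * taubMathews x * (1 - taubMathews x)
      = 8 * x * (5 - 10 * x + 9 * x ^ 2) / (9 * (1 + x) ^ 2) := by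
  rw [(hasDerivAt_taubMathews hx).deriv, taubMathews]
  field_simp
  ring

theorem taubMathews_eta_eq (hx : 1 + x ≠ 0) :
    (2 * x + 1) * taubMathews x - x = 2 * x * (1 + 2 * x - 3 * x ^ 2) / (3 * (1 + x)) := by
  rw [taubMathews]
  field_simp
  ring

-- `5 - 10x + 9x²` has negative discriminant.
theorem zeta_closedForm_pos (h0 : 0 < x) :
    0 < 8 * x * (5 - 10 * x + 9 * x ^ 2) / (9 * (1 + x) ^ 2) :=
  div_pos (mul_pos (by positivity) (by nlinarith [sq_nonneg (3 * x - 5 / 3)])) (by positivity)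

theorem eta_closedForm_pos (h0 : 0 < x) (h1 : x < 1) :
    0 < 2 * x * (1 + 2 * x - 3 * x ^ 2) / (3 * (1 + x)) := by
  have hfactor : 1 + 2 * x - 3 * x ^ 2 = (1 - x) * (1 + 3 * x) := by ring
  rw [hfactor]
  exact div_pos (mul_pos (by positivity) (mul_pos (by linarith) (by linarith))) (by linarith)

end

theorem taub_mathews_compressibility :
    ∀ π : ℝ, 0 < π → π < 1 / 3 →
      (0 < π * (5 - 3 * π) / (3 * (1 + π)) ∧ π * (5 - 3 * π) / (3 * (1 + π)) < 1)
      ∧ ((π + 1) * (π * (5 - 3 * π) / (3 * (1 + π)) - π)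
            * deriv (fun t => t * (5 - 3 * t) / (3 * (1 + t))) π
          + 2 * (π * (5 - 3 * π) / (3 * (1 + π)))
            * (1 - π * (5 - 3 * π) / (3 * (1 + π)))
        = 8 * π * (5 - 10 * π + 9 * π ^ 2) / (9 * (1 + π) ^ 2))
      ∧ 0 < 8 * π * (5 - 10 * π + 9 * π ^ 2) / (9 * (1 + π) ^ 2)
      ∧ ((2 * π + 1) * (π * (5 - 3 * π) / (3 * (1 + π))) - π
          = 2 * π * (1 + 2 * π - 3 * π ^ 2) / (3 * (1 + π)))
      ∧ 0 < 2 * π * (1 + 2 * π - 3 * π ^ 2) / (3 * (1 + π)) := by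
  intro π h0 h13
  have hπ : 1 + π ≠ 0 := by positivity
  exact ⟨⟨taubMathews_pos h0 (by linarith), taubMathews_lt_one (by linarith)⟩,
    taubMathews_zeta_eq hπ, zeta_closedForm_pos h0,
    taubMathews_eta_eq hπ, eta_closedForm_pos h0 (by linarith)⟩
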